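/- arXiv:2507.18724 — 4 statements merged into one kernel-verified Lean document; each statement's English description precedes it below -/
import Mathlib

section
/- For all x, y ∈ X one has d(x, y) ≥ 0; d(x, y) = 0 if and only if x = y; d(x, y) = d(y, x); and d(x, w) ≤ d(x, y) + d(y, w) for all x, y, w ∈ X. In particular d is an integer-valued distance on X. -/
/-- `ℓ₊(x, y) := inf {N : ℤ | x ≤ z^N • y}`. -/
noncomputable def lplus {G X : Type*} [Group G] [MulAction G X] [Preorder X]
    (z : G) (x y : X) : ℤ := sInf {N : ℤ | x ≤ z ^ N • y}

/-- `ℓ₋(x, y) := sup {N : ℤ | z^N • y ≤ x}`. -/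
noncomputable def lminus {G X : Type*} [Group G] [MulAction G X] [Preorder X]
    (z : G) (x y : X) : ℤ := sSup {N : ℤ | z ^ N • y ≤ x}

/-- `d(x, y) := max(ℓ₊(y, x), -ℓ₋(y, x))`. -/
noncomputable def dz {G X : Type*} [Group G] [MulAction G X] [Preorder X]
    (z : G) (x y : X) : ℤ := max (lplus z y x) (-(lminus z y x))

section Aux

variable {G X : Type*} [Group G] [MulAction G X] [PartialOrder X]

lemma aux_smul_le_iff (hinv : ∀ (g : G) (x y : X), x ≤ y → g • x ≤ g • y)
    (g : G) (a b : X) : g • a ≤ g • b ↔ a ≤ b := by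
  constructor
  · intro h
    have := hinv g⁻¹ _ _ h
    simpa using this
  · exact hinv g a b

lemma aux_zpow_mono (hinv : ∀ (g : G) (x y : X), x ≤ y → g • x ≤ g • y)
    {z : G} (hpos : ∀ x : X, x ≤ z • x) :
    ∀ A B : ℤ, A ≤ B → ∀ x : X, z ^ A • x ≤ z ^ B • x := by
  have hn : ∀ n : ℕ, ∀ x : X, x ≤ z ^ n • x := by
    intro n
    induction n with
    | zero => intro x; simp
    | succ k ih =>
      intro x
      calc x ≤ z ^ k • x := ih x
        _ ≤ z • z ^ k • x := hpos _
        _ = z ^ (k + 1) • x := by rw [← mul_smul, ← pow_succ']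
  intro A B hAB x
  have h0 : x ≤ z ^ (B - A) • x := by
    have h : B - A = ((B - A).toNat : ℤ) := (Int.toNat_of_nonneg (by omega)).symm
    rw [h, zpow_natCast]
    exact hn _ x
  have hAB' : A + (B - A) = B := by omega
  calc z ^ A • x ≤ z ^ A • (z ^ (B - A) • x) := hinv _ _ _ h0
    _ = z ^ B • x := by rw [← mul_smul, ← zpow_add, hAB']

lemma aux_lplus_spec (hinv : ∀ (g : G) (x y : X), x ≤ y → g • x ≤ g • y)
    {z : G}
    (hnoret : ∀ (x : X) (N : ℤ), z ^ N • x ≤ x → N ≤ 0)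
    (hreach : ∀ x y : X, ∃ N : ℤ, x ≤ z ^ N • y) (x y : X) :
    x ≤ z ^ lplus z x y • y ∧ ∀ N : ℤ, x ≤ z ^ N • y → lplus z x y ≤ N := by
  set S : Set ℤ := {N : ℤ | x ≤ z ^ N • y} with hS
  have hne : S.Nonempty := hreach x y
  obtain ⟨K, hK⟩ := hreach y x
  have hM : z ^ (-K) • y ≤ x := by
    have := hinv (z ^ (-K)) _ _ hK
    rwa [← mul_smul, ← zpow_add, neg_add_cancel, zpow_zero, one_smul] at this
  have hbdd : BddBelow S := by
    refine ⟨-K, fun N hN => ?_⟩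
    have h1 : z ^ (-K) • y ≤ z ^ N • y := le_trans hM hN
    have h2 : z ^ (-N) • (z ^ (-K) • y) ≤ z ^ (-N) • (z ^ N • y) := hinv _ _ _ h1
    rw [← mul_smul, ← mul_smul, ← zpow_add, ← zpow_add, neg_add_cancel, zpow_zero,
      one_smul] at h2
    have := hnoret y (-N + -K) h2
    omega
  constructor
  · exact Int.csInf_mem hne hbdd
  · intro N hN
    exact csInf_le hbdd hN

lemma aux_lminus_spec (hinv : ∀ (g : G) (x y : X), x ≤ y → g • x ≤ g • y)
    {z : G}
    (hnoret : ∀ (x : X) (N : ℤ), z ^ N • x ≤ x → N ≤ 0)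
    (hreach : ∀ x y : X, ∃ N : ℤ, x ≤ z ^ N • y) (x y : X) :
    z ^ lminus z x y • y ≤ x ∧ ∀ N : ℤ, z ^ N • y ≤ x → N ≤ lminus z x y := by
  set S : Set ℤ := {N : ℤ | z ^ N • y ≤ x} with hS
  obtain ⟨K, hK⟩ := hreach y x
  have hM : z ^ (-K) • y ≤ x := by
    have := hinv (z ^ (-K)) _ _ hK
    rwa [← mul_smul, ← zpow_add, neg_add_cancel, zpow_zero, one_smul] at this
  have hne : S.Nonempty := ⟨-K, hM⟩
  obtain ⟨L, hL⟩ := hreach x y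
  have hbdd : BddAbove S := by
    refine ⟨L, fun N hN => ?_⟩
    have h1 : z ^ N • y ≤ z ^ L • y := le_trans hN hL
    have h2 : z ^ (-L) • (z ^ N • y) ≤ z ^ (-L) • (z ^ L • y) := hinv _ _ _ h1
    rw [← mul_smul, ← mul_smul, ← zpow_add, ← zpow_add, neg_add_cancel, zpow_zero,
      one_smul] at h2
    have := hnoret y (-L + N) h2
    omega
  constructor
  · exact Int.csSup_mem hne hbdd
  · intro N hN
    exact le_csSup hbdd hN

lemma aux_lplus_neg_lminus (hinv : ∀ (g : G) (x y : X), x ≤ y → g • x ≤ g • y)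
    {z : G}
    (hnoret : ∀ (x : X) (N : ℤ), z ^ N • x ≤ x → N ≤ 0)
    (hreach : ∀ x y : X, ∃ N : ℤ, x ≤ z ^ N • y) (x y : X) :
    lplus z x y = -(lminus z y x) := by
  obtain ⟨hp1, hp2⟩ := aux_lplus_spec hinv hnoret hreach x y
  obtain ⟨hm1, hm2⟩ := aux_lminus_spec hinv hnoret hreach y x
  apply le_antisymm
  · apply hp2
    have := hinv (z ^ (-(lminus z y x))) _ _ hm1
    rwa [← mul_smul, ← zpow_add, neg_add_cancel, zpow_zero, one_smul] at this
  · have h : z ^ (-(lplus z x y)) • x ≤ y := by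
      have := hinv (z ^ (-(lplus z x y))) _ _ hp1
      rwa [← mul_smul, ← zpow_add, neg_add_cancel, zpow_zero, one_smul] at this
    have := hm2 _ h
    omega

end Aux

/-- `d` is a (integer-valued) distance: nonnegative, vanishing exactly on the
diagonal, symmetric and satisfying the triangle inequality. -/
theorem dz_is_distance {G X : Type*} [Group G] [MulAction G X] [PartialOrder X]
    (hinv : ∀ (g : G) (x y : X), x ≤ y → g • x ≤ g • y)
    (z : G) (hcentral : ∀ g : G, z * g = g * z)
    (hpos : ∀ x : X, x ≤ z • x)
    (hnoret : ∀ (x : X) (N : ℤ), z ^ N • x ≤ x → N ≤ 0)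
    (hreach : ∀ x y : X, ∃ N : ℤ, x ≤ z ^ N • y) :
    (∀ x y : X, 0 ≤ dz z x y) ∧
    (∀ x y : X, dz z x y = 0 ↔ x = y) ∧
    (∀ x y : X, dz z x y = dz z y x) ∧
    (∀ x y w : X, dz z x w ≤ dz z x y + dz z y w) := by
  have hps := fun x y => aux_lplus_spec hinv hnoret hreach (x : X) (y : X)
  have hms := fun x y => aux_lminus_spec hinv hnoret hreach (x : X) (y : X)
  -- ℓ₋ ≤ ℓ₊
  have hle : ∀ x y : X, lminus z x y ≤ lplus z x y := by
    intro x y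
    have h1 : z ^ lminus z x y • y ≤ z ^ lplus z x y • y :=
      le_trans (hms x y).1 (hps x y).1
    have h2 := hinv (z ^ (-(lplus z x y))) _ _ h1
    rw [← mul_smul, ← mul_smul, ← zpow_add, ← zpow_add, neg_add_cancel, zpow_zero,
      one_smul] at h2
    have := hnoret y _ h2
    omega
  have hnonneg : ∀ x y : X, 0 ≤ dz z x y := by
    intro x y
    by_contra h
    push_neg at h
    rw [dz] at h
    have h1 : lplus z y x < 0 := lt_of_le_of_lt (le_max_left _ _) h
    have h2 : -(lminus z y x) < 0 := lt_of_le_of_lt (le_max_right _ _) h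
    have := hle y x
    omega
  refine ⟨hnonneg, ?_, ?_, ?_⟩
  · -- vanishing iff equal
    intro x y
    constructor
    · intro h
      rw [dz] at h
      have h1 : lplus z y x ≤ 0 := by
        have := le_max_left (lplus z y x) (-(lminus z y x)); omega
      have h2 : 0 ≤ lminus z y x := by
        have := le_max_right (lplus z y x) (-(lminus z y x)); omega
      have hy : y ≤ x := by
        calc y ≤ z ^ lplus z y x • x := (hps y x).1
          _ ≤ z ^ (0 : ℤ) • x := aux_zpow_mono hinv hpos _ 0 h1 x
          _ = x := by simp
      have hx : x ≤ y := by
        calc x = z ^ (0 : ℤ) • x := by simp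
          _ ≤ z ^ lminus z y x • x := aux_zpow_mono hinv hpos 0 _ h2 x
          _ ≤ y := (hms y x).1
      exact le_antisymm hx hy
    · rintro rfl
      have h1 : lplus z x x ≤ 0 := (hps x x).2 0 (by simp)
      have h2 : 0 ≤ lminus z x x := (hms x x).2 0 (by simp)
      have := hnonneg x x
      rw [dz] at this ⊢
      have hm := max_le h1 (by omega : -(lminus z x x) ≤ 0)
      omega
  · -- symmetry
    intro x y
    rw [dz, dz, aux_lplus_neg_lminus hinv hnoret hreach y x,
      aux_lplus_neg_lminus hinv hnoret hreach x y, max_comm]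
  · -- triangle inequality
    intro x y w
    have hplus : lplus z w x ≤ lplus z w y + lplus z y x := by
      apply (hps w x).2
      calc w ≤ z ^ lplus z w y • y := (hps w y).1
        _ ≤ z ^ lplus z w y • (z ^ lplus z y x • x) := hinv _ _ _ (hps y x).1
        _ = z ^ (lplus z w y + lplus z y x) • x := by rw [← mul_smul, ← zpow_add]
    have hminus : lminus z w y + lminus z y x ≤ lminus z w x := by
      apply (hms w x).2
      calc z ^ (lminus z w y + lminus z y x) • x
          = z ^ lminus z w y • (z ^ lminus z y x • x) := by rw [← mul_smul, ← zpow_add]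
        _ ≤ z ^ lminus z w y • y := hinv _ _ _ (hms y x).1
        _ ≤ w := (hms w y).1
    rw [dz, dz, dz]
    apply max_le
    · calc lplus z w x ≤ lplus z w y + lplus z y x := hplus
        _ ≤ max (lplus z y x) (-(lminus z y x)) + max (lplus z w y) (-(lminus z w y)) := by
            have := le_max_left (lplus z y x) (-(lminus z y x))
            have := le_max_left (lplus z w y) (-(lminus z w y))
            omega
    · calc -(lminus z w x) ≤ -(lminus z w y) + -(lminus z y x) := by omega
        _ ≤ max (lplus z y x) (-(lminus z y x)) + max (lplus z w y) (-(lminus z w y)) := by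
            have := le_max_right (lplus z y x) (-(lminus z y x))
            have := le_max_right (lplus z w y) (-(lminus z w y))
            omega
end

section
/- Suppose in addition that the action of G on X is transitive. Let D be any G-invariant distance on X (D(g • x, g • y) = D(x, y) for all g ∈ G, x, y ∈ X) which is compatible with the order, i.e. x ≤ y and y ≤ w imply D(x, y) ≤ D(x, w). Then for every x₀ ∈ X and all x, y ∈ X one has D(x, y) ≤ 3 · D(x₀, z • x₀) · d(x, y). -/
/-- Any `G`-invariant, order-compatible distance `D` is bounded above by
`3 · D(x₀, z • x₀) · d`.  (Proposition 5.4 of the paper.) -/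
theorem invariant_distance_le_dz {G X : Type*} [Group G] [MulAction G X] [PartialOrder X]
    (hinv : ∀ (g : G) (x y : X), x ≤ y → g • x ≤ g • y)
    (z : G) (hcentral : ∀ g : G, z * g = g * z)
    (hpos : ∀ x : X, x ≤ z • x)
    (hnoret : ∀ (x : X) (N : ℤ), z ^ N • x ≤ x → N ≤ 0)
    (hreach : ∀ x y : X, ∃ N : ℤ, x ≤ z ^ N • y)
    (htrans : ∀ x y : X, ∃ g : G, g • x = y)
    (D : X → X → ℝ)
    (hD0 : ∀ x y : X, D x y = 0 ↔ x = y)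
    (hDnonneg : ∀ x y : X, 0 ≤ D x y)
    (hDsymm : ∀ x y : X, D x y = D y x)
    (hDtri : ∀ x y w : X, D x w ≤ D x y + D y w)
    (hDinv : ∀ (g : G) (x y : X), D (g • x) (g • y) = D x y)
    (hDcomp : ∀ x y w : X, x ≤ y → y ≤ w → D x y ≤ D x w) :
    ∀ (x₀ x y : X), D x y ≤ 3 * D x₀ (z • x₀) * (dz z x y : ℝ) := by
  intro x₀ x y
  set C := D x₀ (z • x₀) with hC
  have hCnn : 0 ≤ C := hDnonneg _ _
  -- D w (z • w) = C for every w
  have hstep : ∀ w : X, D w (z • w) = C := by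
    intro w
    obtain ⟨g, hg⟩ := htrans x₀ w
    rw [← hg, ← mul_smul, hcentral, mul_smul, hDinv]
  -- monotonicity in the power (nat version)
  have hmonN : ∀ (n : ℕ) (w : X), w ≤ z ^ n • w := by
    intro n w
    induction n with
    | zero => simp
    | succ n ih =>
      calc w ≤ z ^ n • w := ih
        _ ≤ z • z ^ n • w := hpos _
        _ = z ^ (n + 1) • w := by rw [← mul_smul, ← pow_succ']
  have hmonZ : ∀ (m n : ℤ) (w : X), m ≤ n → z ^ m • w ≤ z ^ n • w := by
    intro m n w h
    have h1 : w ≤ z ^ ((n - m).toNat : ℤ) • w := by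
      rw [zpow_natCast]; exact hmonN _ w
    have h2 := hinv (z ^ m) _ _ h1
    rwa [← mul_smul, ← zpow_add, Int.toNat_of_nonneg (by omega),
      show m + (n - m) = n by ring] at h2
  -- D w (z^n • w) ≤ n * C (nat version)
  have hbdN : ∀ (n : ℕ) (w : X), D w (z ^ n • w) ≤ (n : ℝ) * C := by
    intro n w
    induction n with
    | zero => simp [(hD0 w w).mpr rfl]
    | succ n ih =>
      have he : z ^ (n + 1) • w = z • z ^ n • w := by rw [← mul_smul, ← pow_succ']
      calc D w (z ^ (n + 1) • w) ≤ D w (z ^ n • w) + D (z ^ n • w) (z ^ (n + 1) • w) :=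
            hDtri _ _ _
        _ ≤ (n : ℝ) * C + C := by
            refine add_le_add ih ?_
            rw [he, hstep]
        _ = ((n + 1 : ℕ) : ℝ) * C := by push_cast; ring
  -- D w (z^m • w) ≤ |m| * C (int version)
  have hbdZ : ∀ (m : ℤ) (w : X), D w (z ^ m • w) ≤ ((|m| : ℤ) : ℝ) * C := by
    intro m w
    rcases le_or_gt 0 m with hm | hm
    · have he : z ^ m • w = z ^ (m.toNat : ℤ) • w := by rw [Int.toNat_of_nonneg hm]
      rw [he, zpow_natCast]
      calc D w (z ^ m.toNat • w) ≤ (m.toNat : ℝ) * C := hbdN m.toNat w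
        _ = ((|m| : ℤ) : ℝ) * C := by
            rw [abs_of_nonneg hm]
            congr 1
            exact_mod_cast congrArg (fun t : ℤ => (t : ℝ)) (Int.toNat_of_nonneg hm)
    · have key : D w (z ^ m • w) = D (z ^ (-m) • w) w := by
        rw [← hDinv (z ^ (-m)) w (z ^ m • w), ← mul_smul, ← zpow_add,
          show -m + m = 0 by ring, zpow_zero, one_smul]
      rw [key, hDsymm]
      have he : z ^ (-m) • w = z ^ ((-m).toNat : ℤ) • w := by
        rw [Int.toNat_of_nonneg (by omega)]
      rw [he, zpow_natCast]
      calc D w (z ^ (-m).toNat • w) ≤ ((-m).toNat : ℝ) * C := hbdN _ w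
        _ = ((|m| : ℤ) : ℝ) * C := by
            rw [abs_of_neg hm]
            congr 1
            exact_mod_cast congrArg (fun t : ℤ => (t : ℝ)) (Int.toNat_of_nonneg (by omega : (0:ℤ) ≤ -m))
  -- the two sets
  set Sp : Set ℤ := {N : ℤ | y ≤ z ^ N • x} with hSp
  set Sm : Set ℤ := {N : ℤ | z ^ N • x ≤ y} with hSm
  have hSpne : Sp.Nonempty := hreach y x
  have hSmne : Sm.Nonempty := by
    obtain ⟨M, hM⟩ := hreach x y
    refine ⟨-M, ?_⟩
    have := hinv (z ^ (-M)) _ _ hM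
    rwa [← mul_smul, ← zpow_add, show -M + M = 0 by ring, zpow_zero, one_smul] at this
  have hcross : ∀ a ∈ Sm, ∀ b ∈ Sp, a ≤ b := by
    intro a ha b hb
    have h1 : z ^ a • x ≤ z ^ b • x := le_trans ha hb
    have h2 := hinv (z ^ (-b)) _ _ h1
    rw [← mul_smul, ← mul_smul, ← zpow_add, ← zpow_add, show -b + b = 0 by ring,
      zpow_zero, one_smul] at h2
    have := hnoret x (-b + a) h2
    omega
  have hbbp : BddBelow Sp := by
    obtain ⟨a, ha⟩ := hSmne
    exact ⟨a, fun b hb => hcross a ha b hb⟩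
  have hbam : BddAbove Sm := by
    obtain ⟨b, hb⟩ := hSpne
    exact ⟨b, fun a ha => hcross a ha b hb⟩
  have hpmem : sInf Sp ∈ Sp := Int.csInf_mem hSpne hbbp
  have hqmem : sSup Sm ∈ Sm := Int.csSup_mem hSmne hbam
  set p := sInf Sp with hp
  set q := sSup Sm with hq
  have hqp : q ≤ p := hcross q hqmem p hpmem
  have hy2 : y ≤ z ^ p • x := hpmem
  have hy1 : z ^ q • x ≤ y := hqmem
  -- main estimate
  have hmid : D (z ^ q • x) y ≤ ((p - q : ℤ) : ℝ) * C := by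
    have h1 : D (z ^ q • x) y ≤ D (z ^ q • x) (z ^ p • x) := hDcomp _ _ _ hy1 hy2
    have h2 : D (z ^ q • x) (z ^ p • x) = D x (z ^ (p - q) • x) := by
      rw [← hDinv (z ^ q) x (z ^ (p - q) • x), ← mul_smul, ← zpow_add,
        show q + (p - q) = p by ring]
    have h3 := hbdZ (p - q) x
    rw [show |p - q| = p - q from abs_of_nonneg (by omega)] at h3
    calc D (z ^ q • x) y ≤ D x (z ^ (p - q) • x) := by rw [← h2]; exact h1
      _ ≤ ((p - q : ℤ) : ℝ) * C := h3
  have hfirst : D x (z ^ q • x) ≤ ((|q| : ℤ) : ℝ) * C := hbdZ q x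
  have hmain : D x y ≤ ((|q| + (p - q) : ℤ) : ℝ) * C := by
    calc D x y ≤ D x (z ^ q • x) + D (z ^ q • x) y := hDtri _ _ _
      _ ≤ ((|q| : ℤ) : ℝ) * C + ((p - q : ℤ) : ℝ) * C := add_le_add hfirst hmid
      _ = ((|q| + (p - q) : ℤ) : ℝ) * C := by push_cast; ring
  -- compare with dz
  have hd : dz z x y = max p (-q) := by
    simp only [dz, lplus, lminus, hp, hq, hSp, hSm]
  have hint : |q| + (p - q) ≤ 3 * dz z x y := by
    rw [hd]
    have h1 : p ≤ max p (-q) := le_max_left _ _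
    have h2 : -q ≤ max p (-q) := le_max_right _ _
    rcases abs_cases q with ⟨hq1, _⟩ | ⟨hq1, _⟩ <;> omega
  have hcast : ((|q| + (p - q) : ℤ) : ℝ) ≤ 3 * ((dz z x y : ℤ) : ℝ) := by
    exact_mod_cast hint
  calc D x y ≤ ((|q| + (p - q) : ℤ) : ℝ) * C := hmain
    _ ≤ 3 * ((dz z x y : ℤ) : ℝ) * C := mul_le_mul_of_nonneg_right hcast hCnn
    _ = 3 * C * ((dz z x y : ℤ) : ℝ) := by ring
end

section
/- Let G be a group acting on a set X and let D be a G-invariant distance on X, i.e. D(g • x, g • y) = D(x, y) for all g ∈ G and x, y ∈ X. Let x, y ∈ X and φ, ψ ∈ G be such that ψ • x = x and (ψ * φ⁻¹ * ψ⁻¹) • y = y. Then D(x, φ • x) ≤ 2 · D(x, y). -/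
/-- If `ψ` fixes `x` and the conjugate `ψ * φ⁻¹ * ψ⁻¹` fixes `y`, then any
`G`-invariant distance satisfies `D(x, φ • x) ≤ 2 · D(x, y)`. -/
theorem invariant_distance_flexibility_bound {G X : Type*} [Group G] [MulAction G X]
    (D : X → X → ℝ)
    (hD0 : ∀ x : X, D x x = 0)
    (hDnonneg : ∀ x y : X, 0 ≤ D x y)
    (hDsymm : ∀ x y : X, D x y = D y x)
    (hDtri : ∀ x y w : X, D x w ≤ D x y + D y w)
    (hDinv : ∀ (g : G) (x y : X), D (g • x) (g • y) = D x y)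
    (x y : X) (φ ψ : G)
    (hψ : ψ • x = x)
    (hconj : (ψ * φ⁻¹ * ψ⁻¹) • y = y) :
    D x (φ • x) ≤ 2 * D x y := by
  have hzfix : φ • (ψ⁻¹ • y) = ψ⁻¹ • y := by
    have h1 : φ⁻¹ • ψ⁻¹ • y = ψ⁻¹ • y := by
      conv_rhs => rw [← hconj]
      rw [mul_smul, mul_smul, inv_smul_smul]
    calc φ • (ψ⁻¹ • y) = φ • (φ⁻¹ • ψ⁻¹ • y) := by rw [h1]
    _ = ψ⁻¹ • y := smul_inv_smul _ _
  have hxz : D x (ψ⁻¹ • y) = D x y := by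
    have := hDinv ψ x (ψ⁻¹ • y)
    rw [hψ, smul_inv_smul] at this
    exact this.symm
  have hzφx : D (ψ⁻¹ • y) (φ • x) = D x y := by
    have := hDinv φ⁻¹ (ψ⁻¹ • y) (φ • x)
    rw [inv_smul_smul] at this
    have h1 : φ⁻¹ • ψ⁻¹ • y = ψ⁻¹ • y := by
      nth_rewrite 1 [← hzfix]
      rw [inv_smul_smul]
    rw [h1] at this
    rw [← this, hDsymm, hxz]
  calc D x (φ • x) ≤ D x (ψ⁻¹ • y) + D (ψ⁻¹ • y) (φ • x) := hDtri _ _ _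
  _ = 2 * D x y := by rw [hxz, hzφx]; ring
end

section
/- Let Λ be a topological space and V a real normed vector space, and let π : Λ × V → Λ be the projection onto the first factor. Let D' ⊆ Λ, let K ⊆ D' × V be a compact subset, let B ⊆ K, and let B' ⊆ Λ × V be an open set containing D' × {0}. Then there exists T > 0 such that for every t ≥ T and every (q, v) ∈ B, the point (q, exp(−t) • v) belongs to B'. -/
/-- Squeezing lemma for the backward Liouville flow in the fiberwise-trivial model:
any subset `B` of a compact set `K ⊆ D' × V` can be squeezed, by the fiberwise
scaling `v ↦ e^{-t} v` for all large `t`, into any open neighborhood `B'` of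
`D' × {0}`. -/
theorem liouville_squeezing {Λ V : Type*} [TopologicalSpace Λ]
    [NormedAddCommGroup V] [NormedSpace ℝ V]
    (D' : Set Λ) (K : Set (Λ × V)) (hK : IsCompact K)
    (hKsub : K ⊆ D' ×ˢ (Set.univ : Set V))
    (B : Set (Λ × V)) (hB : B ⊆ K)
    (B' : Set (Λ × V)) (hB'open : IsOpen B')
    (hB'sub : D' ×ˢ ({0} : Set V) ⊆ B') :
    ∃ T : ℝ, 0 < T ∧ ∀ t : ℝ, T ≤ t → ∀ p ∈ B, (p.1, Real.exp (-t) • p.2) ∈ B' := by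
  set F : (Λ × V) × ℝ → Λ × V := fun ps => (ps.1.1, ps.2 • ps.1.2) with hF
  have hFc : Continuous F := by fun_prop
  have hsub : K ×ˢ ({0} : Set ℝ) ⊆ F ⁻¹' B' := by
    rintro ⟨p, s⟩ ⟨hp, hs⟩
    simp only [Set.mem_singleton_iff] at hs
    subst hs
    have hp1 : p.1 ∈ D' := (hKsub hp).1
    simpa [hF] using hB'sub (Set.mk_mem_prod hp1 rfl)
  obtain ⟨v, w, hv, hw, hKv, h0w, hvw⟩ :=
    generalized_tube_lemma hK isCompact_singleton (hB'open.preimage hFc) hsub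
  obtain ⟨ε, hε, hball⟩ := Metric.isOpen_iff.1 hw 0 (h0w rfl)
  refine ⟨max 1 (1 - Real.log ε), lt_of_lt_of_le one_pos (le_max_left _ _), ?_⟩
  intro t ht p hp
  have hexp : Real.exp (-t) < ε := by
    have h1 : t ≥ 1 - Real.log ε := le_trans (le_max_right _ _) ht
    have h2 : Real.exp (-t) ≤ Real.exp (Real.log ε - 1) := by
      apply Real.exp_le_exp.2; linarith
    have h3 : Real.exp (Real.log ε - 1) = ε * Real.exp (-1) := by
      rw [Real.exp_sub, Real.exp_log hε, Real.exp_neg]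
      ring
    have h4 : ε * Real.exp (-1) < ε := by
      have := Real.exp_lt_one_iff.mpr (by norm_num : (-1 : ℝ) < 0)
      nlinarith
    linarith
  have hmem : (p, Real.exp (-t)) ∈ v ×ˢ w := by
    refine ⟨hKv (hB hp), hball ?_⟩
    simp [Real.dist_eq, abs_of_pos (Real.exp_pos _), hexp]
  exact hvw hmem
end
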